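/- If L is a nonempty linear order in dLO_fp¹⁰ (discrete, finitely presented, with a minimum element and with no maximum element), then there exist L₂ ∈ dLO_fp¹¹ and L₁ ∈ dLO_fp¹¹ ∪ {𝟎} such that L ≅ L₁ + L₂·ω. -/

import Mathlib

/-- Bundled linear orders (in `Type 0`). -/
structure BLinOrd : Type 1 where
  carrier : Type
  [str : LinearOrder carrier]

attribute [instance] BLinOrd.str

/-- The bundled linear order on a given type. -/
def BLinOrd.of (α : Type) [LinearOrder α] : BLinOrd := ⟨α⟩

/-- The class of finitely presented linear orders: the smallest class of linear orders
containing `𝟎` and `𝟏` that is closed under order isomorphism, binary order sums,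
and the anti-lexicographic products `L·ω` and `L·ω*`. -/
inductive LOfp : BLinOrd → Prop
  | empty : LOfp (BLinOrd.of (Fin 0))
  | one : LOfp (BLinOrd.of (Fin 1))
  | iso {X Y : BLinOrd} : LOfp X → Nonempty (X.carrier ≃o Y.carrier) → LOfp Y
  | add {X Y : BLinOrd} : LOfp X → LOfp Y → LOfp (BLinOrd.of (X.carrier ⊕ₗ Y.carrier))
  | mulOmega {X : BLinOrd} : LOfp X → LOfp (BLinOrd.of (ℕ ×ₗ X.carrier))
  | mulOmegaStar {X : BLinOrd} : LOfp X → LOfp (BLinOrd.of (ℕᵒᵈ ×ₗ X.carrier))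

/-- A linear order is discrete if every non-maximal element has an immediate successor
and every non-minimal element has an immediate predecessor. -/
def IsDiscreteLO (α : Type*) [LinearOrder α] : Prop :=
  (∀ a : α, (∃ b, a < b) → ∃ b, a ⋖ b) ∧ (∀ a : α, (∃ b, b < a) → ∃ b, b ⋖ a)

/-- Bounded discrete finitely presented linear orders: discrete members of `LOfp` with a
minimum element and a maximum element. -/
def dLOfp11 (X : BLinOrd) : Prop :=
  LOfp X ∧ IsDiscreteLO X.carrier ∧
    (∃ a : X.carrier, ∀ x, a ≤ x) ∧ (∃ a : X.carrier, ∀ x, x ≤ a)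

/-!
Every discrete finitely presented linear order is isomorphic to `A·ω* + M + B·ω` with
`A, M, B ∈ dLO_fp¹¹ ∪ {𝟎}`, by induction on the presentation. In a discrete sum `X + Y` the last
block `B·ω` of `X` and the first block `A'·ω*` of `Y` are empty or nonempty together (a maximum
of `X` needs a minimum of `Y` as its successor), and `B·ω + A'·ω*` is bounded, so it joins the
middle parts. For `L·ω` the same argument inside `L + L` shows that `A` and `B` are empty or
nonempty together, and the rotation `(P + Q)·ω ≅ P + (Q + P)·ω` with `P = A·ω*` puts the result
in normal form; `L·ω*` is dual. Finally, a minimum forces `A = 𝟎` and the absence of a maximum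
forces `B ≠ 𝟎`.
-/

open Function OrderDual Sum

namespace Sum.Lex

variable {α β : Type*}

theorem isEmpty_iff : IsEmpty (α ⊕ₗ β) ↔ IsEmpty α ∧ IsEmpty β :=
  toLex.isEmpty_congr.symm.trans isEmpty_sum

instance [IsEmpty α] [IsEmpty β] : IsEmpty (α ⊕ₗ β) := isEmpty_iff.2 ⟨‹_›, ‹_›⟩

variable [LinearOrder α] [LinearOrder β]

@[simp]
theorem toLex_inl_covBy_toLex_inl_iff {a b : α} :
    (toLex (inl a) : α ⊕ₗ β) ⋖ toLex (inl b) ↔ a ⋖ b := by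
  simp [CovBy, Lex.forall]

@[simp]
theorem toLex_inr_covBy_toLex_inr_iff {a b : β} :
    (toLex (inr a) : α ⊕ₗ β) ⋖ toLex (inr b) ↔ a ⋖ b := by
  simp [CovBy, Lex.forall]

@[simp]
theorem toLex_inl_covBy_toLex_inr_iff {a : α} {b : β} :
    (toLex (inl a) : α ⊕ₗ β) ⋖ toLex (inr b) ↔ IsMax a ∧ IsMin b := by
  simp [CovBy, Lex.forall, isMax_iff_forall_not_lt, isMin_iff_forall_not_lt]

theorem not_toLex_inr_covBy_toLex_inl {a : α} {b : β} :
    ¬(toLex (inr b) : α ⊕ₗ β) ⋖ toLex (inl a) :=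
  fun h => not_inr_lt_inl h.lt

theorem exists_isTop_iff :
    (∃ x : α ⊕ₗ β, IsTop x) ↔ (∃ b : β, IsTop b) ∨ IsEmpty β ∧ ∃ a : α, IsTop a := by
  constructor
  · rintro ⟨a | b, h⟩
    · exact .inr ⟨⟨fun b => not_inr_le_inl (h (toLex (inr b)))⟩, a,
        fun a' => inl_le_inl_iff.1 (h (toLex (inl a')))⟩
    · exact .inl ⟨b, fun b' => inr_le_inr_iff.1 (h (toLex (inr b')))⟩
  · rintro (⟨b, hb⟩ | ⟨hβ, a, ha⟩)
    · exact ⟨toLex (inr b), fun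
        | inl a' => inl_le_inr a' b
        | inr b' => inr_le_inr_iff.2 (hb b')⟩
    · exact ⟨toLex (inl a), fun
        | inl a' => inl_le_inl_iff.2 (ha a')
        | inr b' => hβ.elim b'⟩

theorem exists_isBot_iff :
    (∃ x : α ⊕ₗ β, IsBot x) ↔ (∃ a : α, IsBot a) ∨ IsEmpty α ∧ ∃ b : β, IsBot b := by
  constructor
  · rintro ⟨a | b, h⟩
    · exact .inl ⟨a, fun a' => inl_le_inl_iff.1 (h (toLex (inl a')))⟩
    · exact .inr ⟨⟨fun a => not_inr_le_inl (h (toLex (inl a)))⟩, b,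
        fun b' => inr_le_inr_iff.1 (h (toLex (inr b')))⟩
  · rintro (⟨a, ha⟩ | ⟨hα, b, hb⟩)
    · exact ⟨toLex (inl a), fun
        | inl a' => inl_le_inl_iff.2 (ha a')
        | inr b' => inl_le_inr a b'⟩
    · exact ⟨toLex (inr b), fun
        | inl a' => hα.elim a'
        | inr b' => inr_le_inr_iff.2 (hb b')⟩

end Sum.Lex

namespace Prod.Lex

variable {α β : Type*}

theorem isEmpty_iff : IsEmpty (α ×ₗ β) ↔ IsEmpty α ∨ IsEmpty β :=
  toLex.isEmpty_congr.symm.trans isEmpty_prod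

instance [IsEmpty β] : IsEmpty (α ×ₗ β) := isEmpty_iff.2 (.inr ‹_›)

variable [PartialOrder α] [Preorder β]

theorem exists_isTop_iff : (∃ x : α ×ₗ β, IsTop x) ↔ (∃ a : α, IsTop a) ∧ ∃ b : β, IsTop b := by
  constructor
  · rintro ⟨⟨a, b⟩, h⟩
    exact ⟨⟨a, fun a' => (toLex_le_toLex'.1 (h (toLex (a', b)))).1⟩,
      ⟨b, fun b' => (toLex_le_toLex'.1 (h (toLex (a, b')))).2 rfl⟩⟩
  · rintro ⟨⟨a, ha⟩, ⟨b, hb⟩⟩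
    exact ⟨toLex (a, b), fun ⟨a', b'⟩ => toLex_le_toLex'.2 ⟨ha a', fun _ => hb b'⟩⟩

theorem exists_isBot_iff : (∃ x : α ×ₗ β, IsBot x) ↔ (∃ a : α, IsBot a) ∧ ∃ b : β, IsBot b := by
  constructor
  · rintro ⟨⟨a, b⟩, h⟩
    exact ⟨⟨a, fun a' => (toLex_le_toLex'.1 (h (toLex (a', b)))).1⟩,
      ⟨b, fun b' => (toLex_le_toLex'.1 (h (toLex (a, b')))).2 rfl⟩⟩
  · rintro ⟨⟨a, ha⟩, ⟨b, hb⟩⟩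
    exact ⟨toLex (a, b), fun ⟨a', b'⟩ => toLex_le_toLex'.2 ⟨ha a', fun _ => hb b'⟩⟩

end Prod.Lex

namespace OrderIso

variable {α β : Type*} [Preorder α] [Preorder β]

theorem exists_isTop_congr (e : α ≃o β) : (∃ a : α, IsTop a) ↔ ∃ b : β, IsTop b :=
  ⟨fun ⟨a, ha⟩ => ⟨e a, fun b => e.symm_apply_le.1 (ha (e.symm b))⟩,
    fun ⟨b, hb⟩ => ⟨e.symm b, fun a => e.le_symm_apply.2 (hb (e a))⟩⟩

theorem exists_isBot_congr (e : α ≃o β) : (∃ a : α, IsBot a) ↔ ∃ b : β, IsBot b :=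
  ⟨fun ⟨a, ha⟩ => ⟨e a, fun b => e.le_symm_apply.1 (ha (e.symm b))⟩,
    fun ⟨b, hb⟩ => ⟨e.symm b, fun a => e.symm_apply_le.2 (hb (e a))⟩⟩

end OrderIso

namespace IsDiscreteLO

variable {α β ι : Type*} [LinearOrder α] [LinearOrder β] [LinearOrder ι]

theorem of_orderIso (h : IsDiscreteLO α) (e : α ≃o β) : IsDiscreteLO β := by
  refine ⟨fun b ⟨c, hbc⟩ => ?_, fun b ⟨c, hcb⟩ => ?_⟩
  · obtain ⟨d, hd⟩ := h.1 (e.symm b) ⟨e.symm c, e.symm.lt_iff_lt.2 hbc⟩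
    exact ⟨e d, by simpa using (apply_covBy_apply_iff e).2 hd⟩
  · obtain ⟨d, hd⟩ := h.2 (e.symm b) ⟨e.symm c, e.symm.lt_iff_lt.2 hcb⟩
    exact ⟨e d, by simpa using (apply_covBy_apply_iff e).2 hd⟩

theorem of_isEmpty [IsEmpty α] : IsDiscreteLO α := ⟨isEmptyElim, isEmptyElim⟩

theorem of_succOrder_predOrder [SuccOrder α] [PredOrder α] : IsDiscreteLO α :=
  ⟨fun _ ⟨_, h⟩ => ⟨_, Order.covBy_succ_of_not_isMax (not_isMax_iff.2 ⟨_, h⟩)⟩,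
    fun _ ⟨_, h⟩ => ⟨_, Order.pred_covBy_of_not_isMin (not_isMin_iff.2 ⟨_, h⟩)⟩⟩

theorem sumLex (ha : IsDiscreteLO α) (hb : IsDiscreteLO β)
    (hab : Nonempty α → Nonempty β → ((∃ a : α, IsTop a) ↔ ∃ b : β, IsBot b)) :
    IsDiscreteLO (α ⊕ₗ β) := by
  constructor
  · rintro (a | b) ⟨a' | b', hc⟩
    · obtain ⟨d, hd⟩ := ha.1 a ⟨a', Lex.inl_lt_inl_iff.1 hc⟩
      exact ⟨toLex (inl d), Lex.toLex_inl_covBy_toLex_inl_iff.2 hd⟩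
    · by_cases hmax : IsMax a
      · obtain ⟨m, hm⟩ := (hab ⟨a⟩ ⟨b'⟩).1 ⟨a, hmax.isTop⟩
        exact ⟨toLex (inr m), Lex.toLex_inl_covBy_toLex_inr_iff.2 ⟨hmax, hm.isMin⟩⟩
      · obtain ⟨d, hd⟩ := ha.1 a (not_isMax_iff.1 hmax)
        exact ⟨toLex (inl d), Lex.toLex_inl_covBy_toLex_inl_iff.2 hd⟩
    · exact absurd hc Lex.not_inr_lt_inl
    · obtain ⟨d, hd⟩ := hb.1 b ⟨b', Lex.inr_lt_inr_iff.1 hc⟩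
      exact ⟨toLex (inr d), Lex.toLex_inr_covBy_toLex_inr_iff.2 hd⟩
  · rintro (a | b) ⟨a' | b', hc⟩
    · obtain ⟨d, hd⟩ := ha.2 a ⟨a', Lex.inl_lt_inl_iff.1 hc⟩
      exact ⟨toLex (inl d), Lex.toLex_inl_covBy_toLex_inl_iff.2 hd⟩
    · exact absurd hc Lex.not_inr_lt_inl
    · by_cases hmin : IsMin b
      · obtain ⟨m, hm⟩ := (hab ⟨a'⟩ ⟨b⟩).2 ⟨b, hmin.isBot⟩
        exact ⟨toLex (inl m), Lex.toLex_inl_covBy_toLex_inr_iff.2 ⟨hm.isMax, hmin⟩⟩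
      · obtain ⟨d, hd⟩ := hb.2 b (not_isMin_iff.1 hmin)
        exact ⟨toLex (inr d), Lex.toLex_inr_covBy_toLex_inr_iff.2 hd⟩
    · obtain ⟨d, hd⟩ := hb.2 b ⟨b', Lex.inr_lt_inr_iff.1 hc⟩
      exact ⟨toLex (inr d), Lex.toLex_inr_covBy_toLex_inr_iff.2 hd⟩

theorem of_sumLex_left (h : IsDiscreteLO (α ⊕ₗ β)) : IsDiscreteLO α := by
  constructor
  · intro a ⟨c, hc⟩
    obtain ⟨d | d, hd⟩ := h.1 (toLex (inl a)) ⟨toLex (inl c), Lex.inl_lt_inl_iff.2 hc⟩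
    · exact ⟨d, Lex.toLex_inl_covBy_toLex_inl_iff.1 hd⟩
    · exact absurd hc (Lex.toLex_inl_covBy_toLex_inr_iff.1 hd).1.not_lt
  · intro a ⟨c, hc⟩
    obtain ⟨d | d, hd⟩ := h.2 (toLex (inl a)) ⟨toLex (inl c), Lex.inl_lt_inl_iff.2 hc⟩
    · exact ⟨d, Lex.toLex_inl_covBy_toLex_inl_iff.1 hd⟩
    · exact absurd hd Lex.not_toLex_inr_covBy_toLex_inl

theorem of_sumLex_right (h : IsDiscreteLO (α ⊕ₗ β)) : IsDiscreteLO β := by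
  constructor
  · intro b ⟨c, hc⟩
    obtain ⟨d | d, hd⟩ := h.1 (toLex (inr b)) ⟨toLex (inr c), Lex.inr_lt_inr_iff.2 hc⟩
    · exact absurd hd Lex.not_toLex_inr_covBy_toLex_inl
    · exact ⟨d, Lex.toLex_inr_covBy_toLex_inr_iff.1 hd⟩
  · intro b ⟨c, hc⟩
    obtain ⟨d | d, hd⟩ := h.2 (toLex (inr b)) ⟨toLex (inr c), Lex.inr_lt_inr_iff.2 hc⟩
    · exact absurd hc (Lex.toLex_inl_covBy_toLex_inr_iff.1 hd).2.not_lt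
    · exact ⟨d, Lex.toLex_inr_covBy_toLex_inr_iff.1 hd⟩

theorem exists_isTop_iff_exists_isBot_of_sumLex (h : IsDiscreteLO (α ⊕ₗ β)) (a₀ : α) (b₀ : β) :
    (∃ a : α, IsTop a) ↔ ∃ b : β, IsBot b := by
  constructor
  · rintro ⟨a, ha⟩
    obtain ⟨d | d, hd⟩ := h.1 (toLex (inl a)) ⟨toLex (inr b₀), Lex.inl_lt_inr a b₀⟩
    · exact absurd (Lex.toLex_inl_covBy_toLex_inl_iff.1 hd).lt ha.isMax.not_lt
    · exact ⟨d, (Lex.toLex_inl_covBy_toLex_inr_iff.1 hd).2.isBot⟩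
  · rintro ⟨b, hb⟩
    obtain ⟨d | d, hd⟩ := h.2 (toLex (inr b)) ⟨toLex (inl a₀), Lex.inl_lt_inr a₀ b⟩
    · exact ⟨d, (Lex.toLex_inl_covBy_toLex_inr_iff.1 hd).1.isTop⟩
    · exact absurd (Lex.toLex_inr_covBy_toLex_inr_iff.1 hd).lt hb.isMin.not_lt

theorem prodLex (hι : IsDiscreteLO ι) (hα : IsDiscreteLO α)
    (hbot : Nonempty α → ∃ a : α, IsBot a) (htop : Nonempty α → ∃ a : α, IsTop a) :
    IsDiscreteLO (ι ×ₗ α) := by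
  constructor
  · rintro ⟨i, a⟩ ⟨y, h⟩
    by_cases hmax : IsMax a
    · obtain ⟨k, hk⟩ := hι.1 i ⟨_, (Prod.Lex.lt_iff.1 h).resolve_right fun h => hmax.not_lt h.2⟩
      obtain ⟨m, hm⟩ := hbot ⟨a⟩
      exact ⟨toLex (k, m), Prod.Lex.toLex_covBy_toLex_iff.2 (.inr ⟨hk, hmax, hm.isMin⟩)⟩
    · obtain ⟨d, hd⟩ := hα.1 a (not_isMax_iff.1 hmax)
      exact ⟨toLex (i, d), Prod.Lex.toLex_covBy_toLex_iff.2 (.inl ⟨rfl, hd⟩)⟩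
  · rintro ⟨i, a⟩ ⟨y, h⟩
    by_cases hmin : IsMin a
    · obtain ⟨k, hk⟩ := hι.2 i ⟨_, (Prod.Lex.lt_iff.1 h).resolve_right fun h => hmin.not_lt h.2⟩
      obtain ⟨m, hm⟩ := htop ⟨a⟩
      exact ⟨toLex (k, m), Prod.Lex.toLex_covBy_toLex_iff.2 (.inr ⟨hk, hm.isMax, hmin⟩)⟩
    · obtain ⟨d, hd⟩ := hα.2 a (not_isMin_iff.1 hmin)
      exact ⟨toLex (i, d), Prod.Lex.toLex_covBy_toLex_iff.2 (.inl ⟨rfl, hd⟩)⟩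

theorem of_prodLex (h : IsDiscreteLO (ι ×ₗ α)) (i : ι) : IsDiscreteLO α := by
  constructor
  · intro a ⟨c, hc⟩
    obtain ⟨y, hy⟩ := h.1 (toLex (i, a)) ⟨toLex (i, c), Prod.Lex.toLex_lt_toLex.2 (.inr ⟨rfl, hc⟩)⟩
    rcases Prod.Lex.covBy_iff.1 hy with ⟨-, hay⟩ | ⟨-, hmax, -⟩
    · exact ⟨_, hay⟩
    · exact absurd hc hmax.not_lt
  · intro a ⟨c, hc⟩
    obtain ⟨y, hy⟩ := h.2 (toLex (i, a)) ⟨toLex (i, c), Prod.Lex.toLex_lt_toLex.2 (.inr ⟨rfl, hc⟩)⟩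
    rcases Prod.Lex.covBy_iff.1 hy with ⟨-, hya⟩ | ⟨-, -, hmin⟩
    · exact ⟨_, hya⟩
    · exact absurd hc hmin.not_lt

theorem exists_isTop_iff_exists_isBot_of_prodLex (h : IsDiscreteLO (ι ×ₗ α)) {i j : ι}
    (hij : i < j) : (∃ a : α, IsTop a) ↔ ∃ a : α, IsBot a := by
  constructor
  · rintro ⟨a, ha⟩
    obtain ⟨y, hy⟩ := h.1 (toLex (i, a)) ⟨toLex (j, a), Prod.Lex.toLex_lt_toLex.2 (.inl hij)⟩
    rcases Prod.Lex.covBy_iff.1 hy with ⟨-, hay⟩ | ⟨-, -, hmin⟩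
    · exact absurd hay.lt ha.isMax.not_lt
    · exact ⟨_, hmin.isBot⟩
  · rintro ⟨a, ha⟩
    obtain ⟨y, hy⟩ := h.2 (toLex (j, a)) ⟨toLex (i, a), Prod.Lex.toLex_lt_toLex.2 (.inl hij)⟩
    rcases Prod.Lex.covBy_iff.1 hy with ⟨-, hya⟩ | ⟨-, hmax, -⟩
    · exact absurd hya.lt ha.isMin.not_lt
    · exact ⟨_, hmax.isTop⟩

end IsDiscreteLO

-- `α ∈ dLO_fp¹¹ ∪ {𝟎}`
structure IsBddDiscreteFP (α : Type) [LinearOrder α] : Prop where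
  lofp : LOfp (.of α)
  discrete : IsDiscreteLO α
  exists_isBot : Nonempty α → ∃ a : α, IsBot a
  exists_isTop : Nonempty α → ∃ a : α, IsTop a

namespace IsBddDiscreteFP

variable {α β : Type} [LinearOrder α] [LinearOrder β]

theorem of_isEmpty (α : Type) [LinearOrder α] [IsEmpty α] : IsBddDiscreteFP α :=
  ⟨.iso .empty ⟨OrderIso.ofIsEmpty (Fin 0) α⟩, .of_isEmpty, fun ⟨a⟩ => isEmptyElim a,
    fun ⟨a⟩ => isEmptyElim a⟩

theorem fin_one : IsBddDiscreteFP (Fin 1) :=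
  ⟨.one, .of_succOrder_predOrder, fun _ => ⟨⊥, isBot_bot⟩, fun _ => ⟨⊤, isTop_top⟩⟩

theorem of_orderIso (h : IsBddDiscreteFP α) (e : α ≃o β) : IsBddDiscreteFP β :=
  ⟨.iso h.lofp ⟨e⟩, h.discrete.of_orderIso e,
    fun ⟨b⟩ => e.exists_isBot_congr.1 (h.exists_isBot ⟨e.symm b⟩),
    fun ⟨b⟩ => e.exists_isTop_congr.1 (h.exists_isTop ⟨e.symm b⟩)⟩

theorem exists_isBot_iff (h : IsBddDiscreteFP α) : (∃ a : α, IsBot a) ↔ Nonempty α :=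
  ⟨fun ⟨a, _⟩ => ⟨a⟩, h.exists_isBot⟩

theorem exists_isTop_iff (h : IsBddDiscreteFP α) : (∃ a : α, IsTop a) ↔ Nonempty α :=
  ⟨fun ⟨a, _⟩ => ⟨a⟩, h.exists_isTop⟩

theorem dLOfp11_of_nonempty (h : IsBddDiscreteFP α) (hα : Nonempty α) : dLOfp11 (.of α) :=
  ⟨h.lofp, h.discrete, h.exists_isBot hα, h.exists_isTop hα⟩

theorem dLOfp11_or_isEmpty (h : IsBddDiscreteFP α) : dLOfp11 (.of α) ∨ IsEmpty α :=
  (isEmpty_or_nonempty α).symm.imp h.dLOfp11_of_nonempty id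

theorem sumLex (ha : IsBddDiscreteFP α) (hb : IsBddDiscreteFP β) : IsBddDiscreteFP (α ⊕ₗ β) := by
  rcases isEmpty_or_nonempty α with hα | hα
  · exact hb.of_orderIso OrderIso.emptySumLex.symm
  rcases isEmpty_or_nonempty β with hβ | hβ
  · exact ha.of_orderIso OrderIso.sumLexEmpty.symm
  refine ⟨.add ha.lofp hb.lofp, ha.discrete.sumLex hb.discrete fun _ _ => ?_,
    fun _ => ?_, fun _ => ?_⟩
  · exact iff_of_true (ha.exists_isTop hα) (hb.exists_isBot hβ)
  · exact Lex.exists_isBot_iff.2 (.inl (ha.exists_isBot hα))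
  · exact Lex.exists_isTop_iff.2 (.inl (hb.exists_isTop hβ))

-- `B·ω + A·ω*`
theorem natLex_sumLex_natDualLex (hβ : IsBddDiscreteFP β) (hα : IsBddDiscreteFP α)
    (hβα : IsEmpty β ↔ IsEmpty α) : IsBddDiscreteFP ((ℕ ×ₗ β) ⊕ₗ (ℕᵒᵈ ×ₗ α)) := by
  rcases isEmpty_or_nonempty β with hβe | hβne
  · have := hβα.1 hβe
    exact of_isEmpty _
  have hαne : Nonempty α := not_isEmpty_iff.1 (hβα.not.1 (not_isEmpty_iff.2 hβne))
  refine ⟨.add (.mulOmega hβ.lofp) (.mulOmegaStar hα.lofp), ?_, fun _ => ?_, fun _ => ?_⟩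
  · refine .sumLex (.prodLex .of_succOrder_predOrder hβ.discrete hβ.exists_isBot hβ.exists_isTop)
      (.prodLex .of_succOrder_predOrder hα.discrete hα.exists_isBot hα.exists_isTop)
      fun _ _ => iff_of_false ?_ ?_
    · exact fun ⟨x, hx⟩ => not_isMax x hx.isMax
    · exact fun ⟨x, hx⟩ => not_isMin x hx.isMin
  · exact Lex.exists_isBot_iff.2 (.inl (Prod.Lex.exists_isBot_iff.2
      ⟨⟨⊥, isBot_bot⟩, hβ.exists_isBot hβne⟩))
  · exact Lex.exists_isTop_iff.2 (.inl (Prod.Lex.exists_isTop_iff.2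
      ⟨⟨⊤, isTop_top⟩, hα.exists_isTop hαne⟩))

end IsBddDiscreteFP

section Rotation

variable (α β : Type*) [LinearOrder α] [LinearOrder β]

-- `(α + β)·ω ≅ α + (β + α)·ω`
theorem nonempty_natLex_sumLex_orderIso :
    Nonempty (ℕ ×ₗ (α ⊕ₗ β) ≃o α ⊕ₗ ℕ ×ₗ (β ⊕ₗ α)) := by
  let f (x : α ⊕ₗ ℕ ×ₗ (β ⊕ₗ α)) : ℕ ×ₗ (α ⊕ₗ β) :=
    match ofLex x with
    | inl a => toLex (0, toLex (inl a))
    | inr p =>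
      match ofLex (ofLex p).2 with
      | inl b => toLex ((ofLex p).1, toLex (inr b))
      | inr a => toLex ((ofLex p).1 + 1, toLex (inl a))
  have hf : StrictMono f := by
    simp only [StrictMono, Lex.forall, Sum.forall, Prod.forall]
    simp [f, Prod.Lex.toLex_lt_toLex]
    grind
  have hsurj : Surjective f := by
    rintro ⟨_ | n, a | b⟩
    · exact ⟨toLex (inl a), rfl⟩
    · exact ⟨toLex (inr (toLex (0, toLex (inl b)))), rfl⟩
    · exact ⟨toLex (inr (toLex (n, toLex (inr a)))), rfl⟩
    · exact ⟨toLex (inr (toLex (n + 1, toLex (inl b)))), rfl⟩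
  exact ⟨(hf.orderIsoOfSurjective f hsurj).symm⟩

-- `(α + β)·ω* ≅ (β + α)·ω* + β`
theorem nonempty_natDualLex_sumLex_orderIso :
    Nonempty (ℕᵒᵈ ×ₗ (α ⊕ₗ β) ≃o ℕᵒᵈ ×ₗ (β ⊕ₗ α) ⊕ₗ β) := by
  let f (x : ℕᵒᵈ ×ₗ (β ⊕ₗ α) ⊕ₗ β) : ℕᵒᵈ ×ₗ (α ⊕ₗ β) :=
    match ofLex x with
    | inr b => toLex (toDual 0, toLex (inr b))
    | inl p =>
      match ofLex (ofLex p).2 with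
      | inr a => toLex ((ofLex p).1, toLex (inl a))
      | inl b => toLex (toDual (ofDual (ofLex p).1 + 1), toLex (inr b))
  have hf : StrictMono f := by
    simp only [StrictMono, Lex.forall, Sum.forall, Prod.forall, OrderDual.forall]
    simp [f, Prod.Lex.toLex_lt_toLex, -toDual_add, -toDual_zero, toDual_lt_toDual]
    grind
  have hsurj : Surjective f := by
    rintro ⟨n, a | b⟩
    · exact ⟨toLex (inl (toLex (n, toLex (inr a)))), rfl⟩
    · rcases n with _ | n
      · exact ⟨toLex (inr b), rfl⟩
      · exact ⟨toLex (inl (toLex (toDual n, toLex (inl b)))), rfl⟩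
  exact ⟨(hf.orderIsoOfSurjective f hsurj).symm⟩

end Rotation

-- `A·ω* + M + B·ω`
abbrev NormalForm (A M B : Type) [LinearOrder A] [LinearOrder M] [LinearOrder B] : Type :=
  (ℕᵒᵈ ×ₗ A) ⊕ₗ (M ⊕ₗ (ℕ ×ₗ B))

def HasNormalForm (α : Type) [LinearOrder α] : Prop :=
  ∃ (A M B : Type) (_ : LinearOrder A) (_ : LinearOrder M) (_ : LinearOrder B),
    IsBddDiscreteFP A ∧ IsBddDiscreteFP M ∧ IsBddDiscreteFP B ∧ Nonempty (α ≃o NormalForm A M B)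

section NormalForm

variable {α β A M B : Type} [LinearOrder α] [LinearOrder β] [LinearOrder A] [LinearOrder M]
  [LinearOrder B]

theorem exists_isTop_iff_isEmpty_of_orderIso [Nonempty α] (e : α ≃o NormalForm A M B)
    (hA : IsBddDiscreteFP A) (hM : IsBddDiscreteFP M) : (∃ a : α, IsTop a) ↔ IsEmpty B := by
  have hne : ¬IsEmpty (NormalForm A M B) := not_isEmpty_iff.2 (Nonempty.map e ‹_›)
  have hℕ : ¬∃ n : ℕ, IsTop n := fun ⟨n, hn⟩ => not_isMax n hn.isMax
  have hℕdual : ∃ n : ℕᵒᵈ, IsTop n := ⟨⊤, isTop_top⟩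
  simp only [Lex.isEmpty_iff, Prod.Lex.isEmpty_iff, not_isEmpty_of_nonempty, false_or] at hne
  simp only [e.exists_isTop_congr, Lex.exists_isTop_iff, Prod.Lex.exists_isTop_iff,
    Lex.isEmpty_iff, Prod.Lex.isEmpty_iff, hA.exists_isTop_iff, hM.exists_isTop_iff, hℕ, hℕdual,
    ← not_isEmpty_iff, not_isEmpty_of_nonempty, false_or, false_and, true_and]
  tauto

theorem exists_isBot_iff_isEmpty_of_orderIso [Nonempty α] (e : α ≃o NormalForm A M B)
    (hM : IsBddDiscreteFP M) (hB : IsBddDiscreteFP B) : (∃ a : α, IsBot a) ↔ IsEmpty A := by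
  have hne : ¬IsEmpty (NormalForm A M B) := not_isEmpty_iff.2 (Nonempty.map e ‹_›)
  have hℕ : ∃ n : ℕ, IsBot n := ⟨⊥, isBot_bot⟩
  have hℕdual : ¬∃ n : ℕᵒᵈ, IsBot n := fun ⟨n, hn⟩ => not_isMin n hn.isMin
  simp only [Lex.isEmpty_iff, Prod.Lex.isEmpty_iff, not_isEmpty_of_nonempty, false_or] at hne
  simp only [e.exists_isBot_congr, Lex.exists_isBot_iff, Prod.Lex.exists_isBot_iff,
    Prod.Lex.isEmpty_iff, hM.exists_isBot_iff, hB.exists_isBot_iff, hℕ, hℕdual,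
    ← not_isEmpty_iff, not_isEmpty_of_nonempty, false_or, false_and, true_and]
  tauto

theorem HasNormalForm.of_orderIso (h : HasNormalForm α) (e : β ≃o α) : HasNormalForm β :=
  let ⟨A, M, B, _, _, _, hA, hM, hB, ⟨f⟩⟩ := h
  ⟨A, M, B, _, _, _, hA, hM, hB, ⟨e.trans f⟩⟩

theorem IsBddDiscreteFP.hasNormalForm (h : IsBddDiscreteFP α) : HasNormalForm α :=
  ⟨Empty, α, Empty, _, _, _, .of_isEmpty _, h, .of_isEmpty _,
    ⟨OrderIso.sumLexEmpty.symm.trans OrderIso.emptySumLex.symm⟩⟩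

theorem HasNormalForm.sumLex (hα : HasNormalForm α) (hβ : HasNormalForm β)
    (hd : IsDiscreteLO (α ⊕ₗ β)) : HasNormalForm (α ⊕ₗ β) := by
  rcases isEmpty_or_nonempty α with hαe | hαne
  · exact hβ.of_orderIso OrderIso.emptySumLex
  rcases isEmpty_or_nonempty β with hβe | hβne
  · exact hα.of_orderIso OrderIso.sumLexEmpty
  obtain ⟨A₁, M₁, B₁, _, _, _, hA₁, hM₁, hB₁, ⟨e₁⟩⟩ := hα
  obtain ⟨A₂, M₂, B₂, _, _, _, hA₂, hM₂, hB₂, ⟨e₂⟩⟩ := hβ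
  have hB₁A₂ : IsEmpty B₁ ↔ IsEmpty A₂ :=
    (exists_isTop_iff_isEmpty_of_orderIso e₁ hA₁ hM₁).symm.trans
      ((hd.exists_isTop_iff_exists_isBot_of_sumLex hαne.some hβne.some).trans
        (exists_isBot_iff_isEmpty_of_orderIso e₂ hM₂ hB₂))
  refine ⟨A₁, M₁ ⊕ₗ (((ℕ ×ₗ B₁) ⊕ₗ (ℕᵒᵈ ×ₗ A₂)) ⊕ₗ M₂), B₂, _, _, _, hA₁,
    hM₁.sumLex ((hB₁.natLex_sumLex_natDualLex hA₂ hB₁A₂).sumLex hM₂), hB₂,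
    ⟨(OrderIso.sumLexCongr e₁ e₂).trans ?_⟩⟩
  -- `(P + (M + Q)) + (P' + (M' + Q')) ≅ P + ((M + ((Q + P') + M')) + Q')`
  exact (OrderIso.sumLexAssoc _ _ _).trans (OrderIso.sumLexCongr (.refl _)
    ((OrderIso.sumLexAssoc _ _ _).trans ((OrderIso.sumLexCongr (.refl _)
      ((OrderIso.sumLexAssoc _ _ _).symm.trans (OrderIso.sumLexAssoc _ _ _).symm)).trans
        (OrderIso.sumLexAssoc _ _ _).symm)))

theorem HasNormalForm.natLex (h : HasNormalForm α) (hd : IsDiscreteLO (ℕ ×ₗ α)) :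
    HasNormalForm (ℕ ×ₗ α) := by
  rcases isEmpty_or_nonempty α with hαe | hαne
  · exact (IsBddDiscreteFP.of_isEmpty _).hasNormalForm
  obtain ⟨A, M, B, _, _, _, hA, hM, hB, ⟨e⟩⟩ := h
  have hBA : IsEmpty B ↔ IsEmpty A :=
    (exists_isTop_iff_isEmpty_of_orderIso e hA hM).symm.trans
      ((hd.exists_isTop_iff_exists_isBot_of_prodLex zero_lt_one).trans
        (exists_isBot_iff_isEmpty_of_orderIso e hM hB))
  obtain ⟨ρ⟩ := nonempty_natLex_sumLex_orderIso (ℕᵒᵈ ×ₗ A) (M ⊕ₗ ℕ ×ₗ B)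
  refine ⟨A, Empty, (M ⊕ₗ ℕ ×ₗ B) ⊕ₗ ℕᵒᵈ ×ₗ A, _, _, _, hA, .of_isEmpty _,
    (hM.sumLex (hB.natLex_sumLex_natDualLex hA hBA)).of_orderIso (OrderIso.sumLexAssoc _ _ _).symm,
    ⟨(Prod.Lex.prodLexCongr (.refl ℕ) e).trans
      (ρ.trans (OrderIso.sumLexCongr (.refl _) OrderIso.emptySumLex.symm))⟩⟩

theorem HasNormalForm.natDualLex (h : HasNormalForm α) (hd : IsDiscreteLO (ℕᵒᵈ ×ₗ α)) :
    HasNormalForm (ℕᵒᵈ ×ₗ α) := by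
  rcases isEmpty_or_nonempty α with hαe | hαne
  · exact (IsBddDiscreteFP.of_isEmpty _).hasNormalForm
  obtain ⟨A, M, B, _, _, _, hA, hM, hB, ⟨e⟩⟩ := h
  have hBA : IsEmpty B ↔ IsEmpty A :=
    (exists_isTop_iff_isEmpty_of_orderIso e hA hM).symm.trans
      ((hd.exists_isTop_iff_exists_isBot_of_prodLex (toDual_lt_toDual.2 zero_lt_one)).trans
        (exists_isBot_iff_isEmpty_of_orderIso e hM hB))
  obtain ⟨ρ⟩ := nonempty_natDualLex_sumLex_orderIso ((ℕᵒᵈ ×ₗ A) ⊕ₗ M) (ℕ ×ₗ B)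
  refine ⟨(ℕ ×ₗ B) ⊕ₗ (ℕᵒᵈ ×ₗ A) ⊕ₗ M, Empty, B, _, _, _,
    ((hB.natLex_sumLex_natDualLex hA hBA).sumLex hM).of_orderIso (OrderIso.sumLexAssoc _ _ _),
    .of_isEmpty _, hB, ⟨(Prod.Lex.prodLexCongr (.refl ℕᵒᵈ)
      (e.trans (OrderIso.sumLexAssoc _ _ _).symm)).trans
      (ρ.trans (OrderIso.sumLexCongr (.refl _) OrderIso.emptySumLex.symm))⟩⟩

end NormalForm

theorem LOfp.hasNormalForm {X : BLinOrd} (hX : LOfp X) (hd : IsDiscreteLO X.carrier) :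
    HasNormalForm X.carrier := by
  induction hX with
  | empty => exact (IsBddDiscreteFP.of_isEmpty (Fin 0)).hasNormalForm
  | one => exact IsBddDiscreteFP.fin_one.hasNormalForm
  | iso _ he ih =>
    obtain ⟨e⟩ := he
    exact (ih (hd.of_orderIso e.symm)).of_orderIso e.symm
  | add _ _ ihX ihY => exact (ihX hd.of_sumLex_left).sumLex (ihY hd.of_sumLex_right) hd
  | mulOmega _ ih => exact (ih (hd.of_prodLex 0)).natLex hd
  | mulOmegaStar _ ih => exact (ih (hd.of_prodLex (toDual 0))).natDualLex hd

theorem dLOfp10_structure_general (X : BLinOrd) (hfp : LOfp X)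
    (hdisc : IsDiscreteLO X.carrier)
    (hmin : ∃ m : X.carrier, ∀ x, m ≤ x)
    (hnomax : ∀ a : X.carrier, ∃ b, a < b) :
    ∃ L1 L2 : BLinOrd, dLOfp11 L2 ∧ (dLOfp11 L1 ∨ IsEmpty L1.carrier) ∧
      Nonempty (X.carrier ≃o (L1.carrier ⊕ₗ (ℕ ×ₗ L2.carrier))) := by
  obtain ⟨A, M, B, _, _, _, hA, hM, hB, ⟨e⟩⟩ := hfp.hasNormalForm hdisc
  have : Nonempty X.carrier := hmin.nonempty
  have : IsEmpty A := (exists_isBot_iff_isEmpty_of_orderIso e hM hB).1 hmin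
  have : NoMaxOrder X.carrier := ⟨hnomax⟩
  have hBne : Nonempty B := by
    rw [← not_isEmpty_iff, ← exists_isTop_iff_isEmpty_of_orderIso e hA hM]
    exact fun ⟨x, hx⟩ => not_isMax x hx.isMax
  exact ⟨.of M, .of B, hB.dLOfp11_of_nonempty hBne, hM.dLOfp11_or_isEmpty,
    ⟨e.trans OrderIso.emptySumLex⟩⟩

/-- a nonempty discrete finitely presented linear order with a minimum and
with no maximum is isomorphic to `L₁ + L₂·ω` with `L₂ ∈ dLO_fp¹¹` and
`L₁ ∈ dLO_fp¹¹ ∪ {𝟎}`. -/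
theorem dLOfp10_structure (X : BLinOrd) (hne : Nonempty X.carrier) (hfp : LOfp X)
    (hdisc : IsDiscreteLO X.carrier)
    (hmin : ∃ m : X.carrier, ∀ x, m ≤ x)
    (hnomax : ∀ a : X.carrier, ∃ b, a < b) :
    ∃ L1 L2 : BLinOrd, dLOfp11 L2 ∧ (dLOfp11 L1 ∨ IsEmpty L1.carrier) ∧
      Nonempty (X.carrier ≃o (L1.carrier ⊕ₗ (ℕ ×ₗ L2.carrier))) :=
  dLOfp10_structure_general X hfp hdisc hmin hnomax
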